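/- arXiv:1012.4210 — 3 statements merged into one kernel-verified Lean document; each statement's English description precedes it below -/
import Mathlib

section
/- Let n ≥ 2, let a ≤ b be nonnegative integers, and let D = (d_1, d_2, …, d_n) be a nondecreasing sequence of nonnegative integers that is the score sequence of some (a,b,n)-tournament. Then for every k with 1 ≤ k ≤ n it holds that a·B_k ≤ S_k ≤ b·B_n − L_k − (n−k)·d_k, where B_k = k(k−1)/2, S_k = d_1 + ⋯ + d_k, L_0 = 0 and L_k = max(L_{k−1}, b·B_k − S_k). -/
/-- `D` is the score sequence of some `(a,b,n)`-tournament. -/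
def IsScoreSeqAB (n : ℕ) (a b : ℕ) (D : Fin n → ℕ) : Prop :=
  ∃ M : Fin n → Fin n → ℕ,
    (∀ i, M i i = 0) ∧
    (∀ i j, i ≠ j → a ≤ M i j + M j i ∧ M i j + M j i ≤ b) ∧
    (∀ i, ∑ j, M i j = D i)

/-- Partial sum `S_k = d_1 + ⋯ + d_k` (as an integer). -/
def Spart (n : ℕ) (D : Fin n → ℕ) (k : ℕ) : ℤ :=
  ∑ i : Fin n, if (i : ℕ) < k then (D i : ℤ) else 0

/-- `B_k = k(k-1)/2` (as an integer). -/
def Bbin (k : ℕ) : ℤ := (k * (k - 1) / 2 : ℕ)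

/-- The loss function: `L_0 = 0`, `L_k = max (L_{k-1}, b·B_k − S_k)`, computed in `ℤ`. -/
def Lloss (n : ℕ) (D : Fin n → ℕ) (b : ℕ) : ℕ → ℤ
  | 0 => 0
  | k + 1 => max (Lloss n D b k) ((b : ℤ) * Bbin (k + 1) - Spart n D (k + 1))

/-
Inside any set `s` of players each of the `#s (#s - 1) / 2` games hands out between `a` and `b`
points. The points scored by `s` include all those handed out inside `s`, and are among those
handed out in games involving a player of `s`. For the first `k` players this gives `a B_k ≤ S_k`;
for the players after the first `j` it gives `S_n - S_j ≤ b (B_n - B_j)`, i.e.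
`b B_j - S_j ≤ b B_n - S_n`, hence `L_k ≤ b B_n - S_n`. Since `D` is nondecreasing,
`S_n ≥ S_k + (n - k) d_k`.
-/

open Finset

section PairSums

variable {ι : Type*}

lemma two_mul_sum_sum_eq_sum_sum_add_swap (f : ι → ι → ℕ) (s : Finset ι) :
    2 * ∑ i ∈ s, ∑ j ∈ s, f i j = ∑ i ∈ s, ∑ j ∈ s, (f i j + f j i) := by
  simp only [sum_add_distrib]
  rw [sum_comm (f := fun i j => f j i)]
  ring

variable [DecidableEq ι] {f : ι → ι → ℕ} {s : Finset ι} {c : ℕ}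

lemma sum_sum_eq_sum_sum_erase (hdiag : ∀ i ∈ s, f i i = 0) :
    ∑ i ∈ s, ∑ j ∈ s, f i j = ∑ i ∈ s, ∑ j ∈ s.erase i, f i j :=
  sum_congr rfl fun i hi => by rw [← add_sum_erase s _ hi, hdiag i hi, zero_add]

lemma sum_sum_le_of_offDiag_le (hdiag : ∀ i ∈ s, f i i = 0)
    (hf : ∀ i ∈ s, ∀ j ∈ s, i ≠ j → f i j ≤ c) :
    ∑ i ∈ s, ∑ j ∈ s, f i j ≤ #s * (#s - 1) * c := by
  rw [sum_sum_eq_sum_sum_erase hdiag]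
  calc ∑ i ∈ s, ∑ j ∈ s.erase i, f i j ≤ ∑ _i ∈ s, (#s - 1) * c := by
        refine sum_le_sum fun i hi => ?_
        rw [← card_erase_of_mem hi, ← smul_eq_mul]
        exact sum_le_card_nsmul _ _ _ fun j hj =>
          hf i hi j (mem_of_mem_erase hj) (ne_of_mem_erase hj).symm
    _ = #s * (#s - 1) * c := by rw [sum_const, smul_eq_mul, mul_assoc]

lemma le_sum_sum_of_le_offDiag (hdiag : ∀ i ∈ s, f i i = 0)
    (hf : ∀ i ∈ s, ∀ j ∈ s, i ≠ j → c ≤ f i j) :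
    #s * (#s - 1) * c ≤ ∑ i ∈ s, ∑ j ∈ s, f i j := by
  rw [sum_sum_eq_sum_sum_erase hdiag]
  calc #s * (#s - 1) * c = ∑ _i ∈ s, (#s - 1) * c := by rw [sum_const, smul_eq_mul, mul_assoc]
    _ ≤ ∑ i ∈ s, ∑ j ∈ s.erase i, f i j := by
        refine sum_le_sum fun i hi => ?_
        rw [← card_erase_of_mem hi, ← smul_eq_mul]
        exact card_nsmul_le_sum _ _ _ fun j hj =>
          hf i hi j (mem_of_mem_erase hj) (ne_of_mem_erase hj).symm

end PairSums

section PointMatrix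

variable {ι : Type*} [Fintype ι] [DecidableEq ι] {M : ι → ι → ℕ} {a b : ℕ}

theorem mul_le_two_mul_sum_sum_of_le (hdiag : ∀ i, M i i = 0)
    (ha : ∀ i j, i ≠ j → a ≤ M i j + M j i) (s : Finset ι) :
    #s * (#s - 1) * a ≤ 2 * ∑ i ∈ s, ∑ j, M i j :=
  calc #s * (#s - 1) * a ≤ ∑ i ∈ s, ∑ j ∈ s, (M i j + M j i) :=
        le_sum_sum_of_le_offDiag (by simp [hdiag]) fun i _ j _ hij => ha i j hij
    _ = 2 * ∑ i ∈ s, ∑ j ∈ s, M i j := (two_mul_sum_sum_eq_sum_sum_add_swap M s).symm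
    _ ≤ 2 * ∑ i ∈ s, ∑ j, M i j := by
        gcongr
        exact subset_univ s

theorem two_mul_sum_sum_le_of_le (hdiag : ∀ i, M i i = 0)
    (hb : ∀ i j, i ≠ j → M i j + M j i ≤ b) (s : Finset ι) :
    2 * ∑ i ∈ s, ∑ j, M i j ≤ (#s * (#s - 1) + 2 * (#s * #sᶜ)) * b := by
  have hcross : ∑ i ∈ s, ∑ j ∈ sᶜ, M i j ≤ #s * #sᶜ * b := by
    rw [mul_assoc, ← smul_eq_mul, ← smul_eq_mul]
    refine sum_le_card_nsmul _ _ _ fun i hi => sum_le_card_nsmul _ _ _ fun j hj => ?_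
    exact le_trans (Nat.le_add_right (M i j) (M j i))
      (hb i j (ne_of_mem_of_not_mem hi (mem_compl.mp hj)))
  calc 2 * ∑ i ∈ s, ∑ j, M i j
      = ∑ i ∈ s, ∑ j ∈ s, (M i j + M j i) + 2 * ∑ i ∈ s, ∑ j ∈ sᶜ, M i j := by
        rw [← two_mul_sum_sum_eq_sum_sum_add_swap, ← mul_add, ← sum_add_distrib]
        simp only [sum_add_sum_compl]
    _ ≤ #s * (#s - 1) * b + 2 * (#s * #sᶜ * b) := by
        gcongr
        exact sum_sum_le_of_offDiag_le (by simp [hdiag]) fun i _ j _ hij => hb i j hij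
    _ = (#s * (#s - 1) + 2 * (#s * #sᶜ)) * b := by ring

end PointMatrix

lemma Nat.cast_mul_sub_one {R : Type*} [Ring R] (m : ℕ) :
    ((m * (m - 1) : ℕ) : R) = m * (m - 1) := by
  cases m <;> simp

lemma two_mul_Bbin (k : ℕ) : 2 * Bbin k = k * (k - 1) := by
  rw [Bbin, ← Nat.cast_mul_sub_one, ← Nat.cast_ofNat, ← Nat.cast_mul,
    Nat.mul_div_cancel' (Nat.even_mul_pred_self k).two_dvd]

def initSeg (n k : ℕ) : Finset (Fin n) := {i | (i : ℕ) < k}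

lemma card_initSeg {n k : ℕ} (hk : k ≤ n) : #(initSeg n k) = k := by
  rw [initSeg, Fin.card_filter_val_lt, min_eq_right hk]

lemma card_compl_initSeg {n k : ℕ} (hk : k ≤ n) : #(initSeg n k)ᶜ = n - k := by
  rw [card_compl, card_initSeg hk, Fintype.card_fin]

lemma Spart_eq_sum_initSeg (n : ℕ) (D : Fin n → ℕ) (k : ℕ) :
    Spart n D k = ∑ i ∈ initSeg n k, (D i : ℤ) := by
  rw [Spart, initSeg, sum_filter]

lemma Spart_self (n : ℕ) (D : Fin n → ℕ) : Spart n D n = ∑ i, (D i : ℤ) := by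
  simp [Spart]

lemma Spart_add_mul_le_Spart_self {n : ℕ} {D : Fin n → ℕ} (hD : Monotone D) {k : ℕ}
    (hk1 : 1 ≤ k) (hk2 : k ≤ n) :
    Spart n D k + ((n - k : ℕ) : ℤ) * (D ⟨k - 1, Nat.sub_one_lt_of_le hk1 hk2⟩ : ℤ) ≤
      Spart n D n := by
  have htail : #(initSeg n k)ᶜ • (D ⟨k - 1, Nat.sub_one_lt_of_le hk1 hk2⟩ : ℤ) ≤
      ∑ i ∈ (initSeg n k)ᶜ, (D i : ℤ) :=
    card_nsmul_le_sum _ _ _ fun i hi => by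
      simp only [initSeg, compl_filter, mem_filter, mem_univ, true_and, not_lt] at hi
      exact_mod_cast hD (Fin.le_def.mpr (by simp only; omega))
  rw [card_compl_initSeg hk2, nsmul_eq_mul] at htail
  rw [Spart_eq_sum_initSeg, Spart_self, ← sum_add_sum_compl (initSeg n k)]
  linarith

lemma Lloss_le_of_forall {n : ℕ} {D : Fin n → ℕ} {b : ℕ} {C : ℤ} :
    ∀ {k : ℕ}, (∀ j ≤ k, (b : ℤ) * Bbin j - Spart n D j ≤ C) → Lloss n D b k ≤ C
  | 0, h => by simpa [Lloss, Bbin, Spart] using h 0 le_rfl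
  | k + 1, h =>
    max_le (Lloss_le_of_forall fun j hj => h j (hj.trans k.le_succ)) (h (k + 1) le_rfl)

namespace IsScoreSeqAB

variable {n a b : ℕ} {D : Fin n → ℕ}

theorem mul_Bbin_le_Spart (h : IsScoreSeqAB n a b D) {k : ℕ} (hk : k ≤ n) :
    (a : ℤ) * Bbin k ≤ Spart n D k := by
  obtain ⟨M, hdiag, hM, hrow⟩ := h
  have key := mul_le_two_mul_sum_sum_of_le hdiag (fun i j hij => (hM i j hij).1) (initSeg n k)
  simp only [hrow, card_initSeg hk] at key
  have key' : (k : ℤ) * (k - 1) * a ≤ 2 * Spart n D k := by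
    rw [Spart_eq_sum_initSeg, ← Nat.cast_mul_sub_one]
    exact_mod_cast key
  linarith [congrArg ((a : ℤ) * ·) (two_mul_Bbin k)]

theorem loss_le (h : IsScoreSeqAB n a b D) {k : ℕ} (hk : k ≤ n) :
    (b : ℤ) * Bbin k - Spart n D k ≤ b * Bbin n - Spart n D n := by
  obtain ⟨M, hdiag, hM, hrow⟩ := h
  have key := two_mul_sum_sum_le_of_le hdiag (fun i j hij => (hM i j hij).2) (initSeg n k)ᶜ
  simp only [hrow, compl_compl, card_compl_initSeg hk, card_initSeg hk] at key
  have key' : 2 * (Spart n D n - Spart n D k) ≤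
      (((n - k : ℕ) : ℤ) * ((n - k : ℕ) - 1) + 2 * ((n - k : ℕ) * k)) * b := by
    rw [Spart_self, Spart_eq_sum_initSeg, ← sum_compl_add_sum (initSeg n k), add_sub_cancel_right,
      ← Nat.cast_mul_sub_one]
    exact_mod_cast key
  push_cast [Nat.cast_sub hk] at key'
  linarith [congrArg ((b : ℤ) * ·) (two_mul_Bbin n), congrArg ((b : ℤ) * ·) (two_mul_Bbin k)]

end IsScoreSeqAB

/-- For `n ≥ 2`, `a ≤ b`, if a nondecreasing sequence `D` of nonnegative
integers is the score sequence of some `(a,b,n)`-tournament, then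
`a·B_k ≤ S_k ≤ b·B_n − L_k − (n−k)·d_k` for every `1 ≤ k ≤ n`. -/
theorem isScoreSeqAB_necessary (n : ℕ) (a b : ℕ)
    (D : Fin n → ℕ) (hD : Monotone D) (hscore : IsScoreSeqAB n a b D) :
    ∀ k : ℕ, ∀ _hk1 : 1 ≤ k, ∀ _hk2 : k ≤ n,
      (a : ℤ) * Bbin k ≤ Spart n D k ∧
      Spart n D k ≤
        (b : ℤ) * Bbin n - Lloss n D b k - ((n - k : ℕ) : ℤ) * (D ⟨k - 1, by omega⟩ : ℤ) := by
  intro k hk1 hk2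
  have hL : Lloss n D b k ≤ b * Bbin n - Spart n D n :=
    Lloss_le_of_forall fun j hj => hscore.loss_le (hj.trans hk2)
  exact ⟨hscore.mul_Bbin_le_Spart hk2, by linarith [Spart_add_mul_le_Spart_self hD hk1 hk2]⟩
end

section
/- Let n ≥ 2, let a ≤ b be nonnegative integers, and let D = (d_1, d_2, …, d_n) be a nondecreasing sequence of nonnegative integers such that for every k with 1 ≤ k ≤ n it holds that a·B_k ≤ S_k ≤ b·B_n − L_k − (n−k)·d_k, where B_k = k(k−1)/2, S_k = d_1 + ⋯ + d_k, L_0 = 0 and L_k = max(L_{k−1}, b·B_k − S_k). Then D is the score sequence of some (a,b,n)-tournament. -/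
/-!
Start from the lower triangular `(a,b)`-tournament and take a tournament minimising
`∑ i, |score i - d i|`. If a player `v` scores below `d v`, let `A` be the players reachable from
`v` by repeatedly passing to an opponent that holds a point against the current player. Moving one
point along such a path keeps every pair total, so if `A` contains a player scoring above target,
or a member of a pair with total `< b`, the defect can be lowered. Otherwise no player outside `A`
has a point against `A` and every pair meeting `A` is saturated, so `A` scores
`b (C(m,2) + m (n - m))`, which is less than `∑ i ∈ A, d i`; since the `m` largest entries of `d`
are the last ones, this contradicts `S_n - S_{n-m} ≤ b (B_n - B_{n-m})`, which follows from the
hypothesis at `k = n` because `L_n ≥ b B_k - S_k`. A player scoring above target is handled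
dually with the lower bound `a B_m ≤ S_m`.
-/

open Finset Relation

theorem Relation.ReflTransGen.rel_ne_target {α : Type*} {r : α → α → Prop} {a b : α}
    (h : ReflTransGen r a b) : ReflTransGen (fun x y => r x y ∧ x ≠ b) a b := by
  induction h using ReflTransGen.head_induction_on with
  | refl => exact .refl
  | @head x c hxc _ ih =>
    by_cases hx : x = b
    · exact hx ▸ .refl
    · exact .head ⟨hxc, hx⟩ ih

theorem Relation.ReflTransGen.eq_or_head_rel_ne_source {α : Type*} {r : α → α → Prop} {a b : α}
    (h : ReflTransGen r a b) :
    a = b ∨ ∃ c, r a c ∧ ReflTransGen (fun x y => r x y ∧ x ≠ a) c b := by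
  induction h with
  | refl => exact .inl rfl
  | @tail c d _ hcd ih =>
    by_cases hac : a = c
    · exact .inr ⟨d, hac ▸ hcd, .refl⟩
    · obtain rfl | ⟨e, hae, hec⟩ := ih
      · exact absurd rfl hac
      · exact .inr ⟨e, hae, hec.tail ⟨hcd, Ne.symm hac⟩⟩

theorem Finset.sum_le_sum_of_card_eq {ι N : Type*} [DecidableEq ι] [AddCommMonoid N] [LinearOrder N]
    [IsOrderedAddMonoid N] {s t : Finset ι} {f : ι → N} (hst : #s = #t)
    (h : ∀ x ∈ s \ t, ∀ y ∈ t \ s, f x ≤ f y) : ∑ x ∈ s, f x ≤ ∑ x ∈ t, f x := by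
  have hcard : #(s \ t) = #(t \ s) := by
    have := card_sdiff_add_card_inter s t
    have := card_sdiff_add_card_inter t s
    rw [inter_comm] at this
    omega
  rw [← sum_inter_add_sum_sdiff s t, ← sum_inter_add_sum_sdiff t s, inter_comm t s]
  refine add_le_add_right ?_ _
  rcases (s \ t).eq_empty_or_nonempty with hempty | hne
  · rw [hempty, card_empty, eq_comm, card_eq_zero] at hcard
    simp [hempty, hcard]
  · obtain ⟨x, hx, hmax⟩ := exists_max_image (s \ t) f hne
    calc ∑ y ∈ s \ t, f y ≤ #(s \ t) • f x := sum_le_card_nsmul _ _ _ hmax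
      _ = #(t \ s) • f x := by rw [hcard]
      _ ≤ ∑ y ∈ t \ s, f y := card_nsmul_le_sum _ _ _ (h x hx)

theorem Finset.two_mul_sum_sum_eq_sum_offDiag {ι R : Type*} [DecidableEq ι] [NonAssocSemiring R]
    {M : ι → ι → R}
    (hdiag : ∀ i, M i i = 0) (A : Finset ι) :
    2 * ∑ j ∈ A, ∑ k ∈ A, M j k = ∑ x ∈ A.offDiag, (M x.1 x.2 + M x.2 x.1) := by
  have hdiag' : ∑ x ∈ A.diag, (M x.1 x.2 + M x.2 x.1) = 0 :=
    sum_eq_zero fun x hx => by simp [(mem_diag.1 hx).2, hdiag]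
  calc 2 * ∑ j ∈ A, ∑ k ∈ A, M j k = ∑ j ∈ A, ∑ k ∈ A, (M j k + M k j) := by
        rw [two_mul]; nth_rw 2 [sum_comm]; simp only [sum_add_distrib]
    _ = ∑ x ∈ A.diag ∪ A.offDiag, (M x.1 x.2 + M x.2 x.1) := by
        rw [diag_union_offDiag, sum_product]
    _ = _ := by rw [sum_union (disjoint_diag_offDiag A), hdiag', zero_add]

theorem Finset.card_offDiag_eq_two_mul_choose_two {ι : Type*} [DecidableEq ι] (A : Finset ι) :
    #A.offDiag = 2 * (#A).choose 2 := by
  rw [offDiag_card, Nat.choose_two_right, Nat.mul_div_cancel' (Nat.even_mul_pred_self _).two_dvd,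
    Nat.mul_sub_one]

theorem Finset.sum_sum_le_mul_choose_two {ι : Type*} [DecidableEq ι] {M : ι → ι → ℕ}
    (hdiag : ∀ i, M i i = 0) {A : Finset ι} {c : ℕ}
    (h : ∀ j ∈ A, ∀ k ∈ A, j ≠ k → M j k + M k j ≤ c) :
    ∑ j ∈ A, ∑ k ∈ A, M j k ≤ c * (#A).choose 2 := by
  have := two_mul_sum_sum_eq_sum_offDiag hdiag A ▸ sum_le_card_nsmul A.offDiag _ c fun x hx => by
    obtain ⟨hx1, hx2, hne⟩ := mem_offDiag.1 hx
    exact h _ hx1 _ hx2 hne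
  rw [card_offDiag_eq_two_mul_choose_two, smul_eq_mul] at this
  nlinarith

theorem Finset.mul_choose_two_le_sum_sum {ι : Type*} [DecidableEq ι] {M : ι → ι → ℕ}
    (hdiag : ∀ i, M i i = 0) {A : Finset ι} {c : ℕ}
    (h : ∀ j ∈ A, ∀ k ∈ A, j ≠ k → c ≤ M j k + M k j) :
    c * (#A).choose 2 ≤ ∑ j ∈ A, ∑ k ∈ A, M j k := by
  have := two_mul_sum_sum_eq_sum_offDiag hdiag A ▸ card_nsmul_le_sum A.offDiag _ c fun x hx => by
    obtain ⟨hx1, hx2, hne⟩ := mem_offDiag.1 hx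
    exact h _ hx1 _ hx2 hne
  rw [card_offDiag_eq_two_mul_choose_two, smul_eq_mul] at this
  nlinarith

namespace PointMatrix

variable {ι : Type*}

def IsABTournament (a b : ℕ) (M : ι → ι → ℕ) : Prop :=
  (∀ i, M i i = 0) ∧ ∀ i j, i ≠ j → a ≤ M i j + M j i ∧ M i j + M j i ≤ b

theorem isABTournament_lowerTriangular [LinearOrder ι] {a b : ℕ} (hab : a ≤ b) :
    IsABTournament a b (fun i j : ι => if j < i then a else 0) :=
  ⟨fun i => by simp, fun i j hij => by
    rcases hij.lt_or_gt with h | h <;> simp [h, h.not_gt, hab]⟩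

section
variable [DecidableEq ι]

def setPair (M : ι → ι → ℕ) (p q : ι) (s t : ℕ) : ι → ι → ℕ :=
  fun x y => if x = p ∧ y = q then s else if x = q ∧ y = p then t else M x y

theorem IsABTournament.setPair {a b : ℕ} {M : ι → ι → ℕ} (hM : IsABTournament a b M) {p q : ι}
    (hpq : p ≠ q) {s t : ℕ} (hs : a ≤ s + t) (ht : s + t ≤ b) :
    IsABTournament a b (setPair M p q s t) := by
  refine ⟨fun i => ?_, fun i j hij => ?_⟩
  · grind [PointMatrix.setPair, IsABTournament]
  · have := hM.2 i j hij
    grind [PointMatrix.setPair]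

end

variable [Fintype ι]

def score (M : ι → ι → ℕ) (i : ι) : ℕ := ∑ j, M i j

def scoreDefect (D : ι → ℕ) (M : ι → ι → ℕ) : ℕ := ∑ i, ((score M i : ℤ) - D i).natAbs

theorem scoreDefect_lt {D : ι → ℕ} {M' : ι → ι → ℕ}
    (hle : ∀ i, ((score M' i : ℤ) - D i).natAbs ≤ ((score M i : ℤ) - D i).natAbs) {v : ι}
    (hlt : ((score M' v : ℤ) - D v).natAbs < ((score M v : ℤ) - D v).natAbs) :
    scoreDefect D M' < scoreDefect D M :=
  sum_lt_sum (fun i _ => hle i) ⟨v, mem_univ v, hlt⟩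

variable [DecidableEq ι]

theorem score_setPair (M : ι → ι → ℕ) {p q : ι} (hpq : p ≠ q) (s t : ℕ) (i : ι) :
    score (setPair M p q s t) i + (if i = p then M p q else 0) + (if i = q then M q p else 0) =
      score M i + (if i = p then s else 0) + (if i = q then t else 0) := by
  have hrow : ∀ y, setPair M p q s t i y + (if i = p ∧ y = q then M p q else 0) +
      (if i = q ∧ y = p then M q p else 0) =
      M i y + (if i = p ∧ y = q then s else 0) + (if i = q ∧ y = p then t else 0) := by
    intro y
    grind [PointMatrix.setPair]
  have := congrArg (fun f => ∑ y, f y) (funext hrow)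
  simpa [sum_add_distrib, ite_and, score] using this

variable {a b : ℕ} {M : ι → ι → ℕ}

theorem IsABTournament.exists_shift_of_reflTransGen_of_mem (S : Finset ι) :
    ∀ {M : ι → ι → ℕ} {v j : ι}, IsABTournament a b M →
      ReflTransGen (fun x y => 0 < M y x ∧ x ∈ S) v j →
      ∃ M', IsABTournament a b M' ∧
        ∀ i, score M' i + (if i = j then 1 else 0) = score M i + (if i = v then 1 else 0) := by
  induction S using Finset.strongInduction with
  | H S ih =>
  intro M v j hM hvj
  -- After the first move only edges leaving `v` can be lost, and the rest of the path never
  -- leaves `v`; dropping `v` from `S` records this for the recursive call.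
  obtain rfl | ⟨c, ⟨hcv, hvS⟩, hcj⟩ := hvj.eq_or_head_rel_ne_source
  · exact ⟨M, hM, fun i => rfl⟩
  have hvc : v ≠ c := by rintro rfl; simp [hM.1] at hcv
  set M₁ := PointMatrix.setPair M v c (M v c + 1) (M c v - 1)
  have hM₁ : IsABTournament a b M₁ := hM.setPair hvc (by have := hM.2 v c hvc; omega)
    (by have := hM.2 v c hvc; omega)
  have hcj₁ : ReflTransGen (fun x y => 0 < M₁ y x ∧ x ∈ S.erase v) c j := by
    refine ReflTransGen.mono (fun x y ⟨⟨hyx, hxS⟩, hxv⟩ => ⟨?_, mem_erase.2 ⟨hxv, hxS⟩⟩) _ _ hcj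
    grind [PointMatrix.setPair]
  obtain ⟨M', hM', hscore⟩ := ih _ (erase_ssubset hvS) hM₁ hcj₁
  refine ⟨M', hM', fun i => ?_⟩
  have h₁ : score M₁ i + _ + _ = _ := score_setPair M hvc (M v c + 1) (M c v - 1) i
  have h' := hscore i
  grind

theorem IsABTournament.exists_shift_of_reflTransGen (hM : IsABTournament a b M) {v j : ι}
    (hvj : ReflTransGen (fun x y => 0 < M y x) v j) :
    ∃ M', IsABTournament a b M' ∧
      ∀ i, score M' i + (if i = j then 1 else 0) = score M i + (if i = v then 1 else 0) :=
  hM.exists_shift_of_reflTransGen_of_mem univ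
    (ReflTransGen.mono (fun _ _ h => ⟨h, mem_univ _⟩) _ _ hvj)

theorem sum_score_eq (M : ι → ι → ℕ) (A : Finset ι) :
    ∑ j ∈ A, score M j = ∑ j ∈ A, ∑ k ∈ A, M j k + ∑ j ∈ A, ∑ k ∈ Aᶜ, M j k := by
  simp only [score, ← sum_add_distrib, sum_add_sum_compl]

theorem mul_le_sum_score_of_saturated (hdiag : ∀ i, M i i = 0) {A : Finset ι}
    (hin : ∀ j ∈ A, ∀ k ∉ A, M k j = 0) (hsat : ∀ j ∈ A, ∀ k, j ≠ k → b ≤ M j k + M k j) :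
    b * ((#A).choose 2 + #A * #Aᶜ) ≤ ∑ j ∈ A, score M j := by
  have hinner := mul_choose_two_le_sum_sum hdiag fun j hj k _ hjk => hsat j hj k hjk
  have hcross : b * (#A * #Aᶜ) ≤ ∑ j ∈ A, ∑ k ∈ Aᶜ, M j k :=
    calc b * (#A * #Aᶜ) = ∑ _j ∈ A, ∑ _k ∈ Aᶜ, b := by simp [mul_comm, mul_left_comm]
      _ ≤ _ := sum_le_sum fun j hj => sum_le_sum fun k hk => by
        have hk' := mem_compl.1 hk
        have := hsat j hj k (by rintro rfl; exact hk' hj)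
        have := hin j hj k hk'
        omega
  rw [sum_score_eq, mul_add]
  omega

theorem sum_score_le_mul_choose_two_of_closed (hdiag : ∀ i, M i i = 0) {A : Finset ι}
    (hout : ∀ j ∈ A, ∀ k ∉ A, M j k = 0) (h : ∀ j ∈ A, ∀ k ∈ A, j ≠ k → M j k + M k j ≤ a) :
    ∑ j ∈ A, score M j ≤ a * (#A).choose 2 := by
  have hcross : ∑ j ∈ A, ∑ k ∈ Aᶜ, M j k = 0 :=
    sum_eq_zero fun j hj => sum_eq_zero fun k hk => hout j hj k (mem_compl.1 hk)
  rw [sum_score_eq, hcross, add_zero]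
  exact sum_sum_le_mul_choose_two hdiag h

theorem IsABTournament.exists_scoreDefect_lt_of_score_lt {D : ι → ℕ}
    (hup : ∀ A : Finset ι, ∑ i ∈ A, D i ≤ b * ((#A).choose 2 + #A * #Aᶜ))
    (hM : IsABTournament a b M) {v : ι} (hv : score M v < D v) :
    ∃ M', IsABTournament a b M' ∧ scoreDefect D M' < scoreDefect D M := by
  classical
  set A := univ.filter (ReflTransGen (fun x y => 0 < M y x) v)
  have hmem : ∀ {j}, j ∈ A ↔ ReflTransGen (fun x y => 0 < M y x) v j := by simp [A]
  by_cases hexcess : ∃ j ∈ A, D j < score M j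
  · obtain ⟨j, hj, hDj⟩ := hexcess
    obtain ⟨M', hM', hscore⟩ := hM.exists_shift_of_reflTransGen (hmem.1 hj)
    refine ⟨M', hM', scoreDefect_lt (fun i => ?_) (v := v) ?_⟩
    · have := hscore i; grind
    · have := hscore v; grind
  by_cases hslack : ∃ j ∈ A, ∃ k, j ≠ k ∧ M j k + M k j < b
  · obtain ⟨j, hj, k, hjk, hlt⟩ := hslack
    have hM₁ : IsABTournament a b (PointMatrix.setPair M j k (M j k + 1) (M k j)) :=
      hM.setPair hjk (by have := hM.2 j k hjk; omega) (by omega)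
    have hvj :
        ReflTransGen (fun x y => 0 < PointMatrix.setPair M j k (M j k + 1) (M k j) y x) v j :=
      ReflTransGen.mono (fun x y h => by grind [PointMatrix.setPair]) _ _
        (hmem.1 hj)
    obtain ⟨M', hM', hscore⟩ := hM₁.exists_shift_of_reflTransGen hvj
    refine ⟨M', hM', scoreDefect_lt (fun i => ?_) (v := v) ?_⟩
    · have := hscore i; have := score_setPair M hjk (M j k + 1) (M k j) i
      grind
    · have := hscore v; have := score_setPair M hjk (M j k + 1) (M k j) v
      grind
  push Not at hexcess hslack
  have hin : ∀ j ∈ A, ∀ k ∉ A, M k j = 0 := fun j hj k hk => by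
    by_contra h
    exact hk (hmem.2 ((hmem.1 hj).tail (Nat.pos_of_ne_zero h)))
  have hlow := mul_le_sum_score_of_saturated hM.1 hin hslack
  have hlt : ∑ j ∈ A, score M j < ∑ j ∈ A, D j := sum_lt_sum hexcess ⟨v, hmem.2 .refl, hv⟩
  have := hup A
  omega

theorem IsABTournament.exists_scoreDefect_lt_of_lt_score {D : ι → ℕ}
    (hlow : ∀ A : Finset ι, a * (#A).choose 2 ≤ ∑ i ∈ A, D i)
    (hM : IsABTournament a b M) {v : ι} (hv : D v < score M v) :
    ∃ M', IsABTournament a b M' ∧ scoreDefect D M' < scoreDefect D M := by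
  classical
  set A := univ.filter (ReflTransGen (fun x y => 0 < M x y) v)
  have hmem : ∀ {j}, j ∈ A ↔ ReflTransGen (fun x y => 0 < M x y) v j := by simp [A]
  by_cases hdeficit : ∃ j ∈ A, score M j < D j
  · obtain ⟨j, hj, hDj⟩ := hdeficit
    obtain ⟨M', hM', hscore⟩ := hM.exists_shift_of_reflTransGen (reflTransGen_swap.2 (hmem.1 hj))
    refine ⟨M', hM', scoreDefect_lt (fun i => ?_) (v := v) ?_⟩
    · have := hscore i; grind
    · have := hscore v; grind
  by_cases hslack : ∃ j ∈ A, ∃ k, 0 < M j k ∧ a < M j k + M k j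
  · obtain ⟨j, hj, k, hpos, hlt⟩ := hslack
    have hjk : j ≠ k := by rintro rfl; simp [hM.1] at hpos
    -- Lowering `M j k` first is harmless for a path that never leaves `j`.
    have hM₁ : IsABTournament a b (PointMatrix.setPair M j k (M j k - 1) (M k j)) :=
      hM.setPair hjk (by omega) (by have := hM.2 j k hjk; omega)
    have hvj :
        ReflTransGen (fun x y => 0 < PointMatrix.setPair M j k (M j k - 1) (M k j) x y) v j :=
      ReflTransGen.mono (fun x y h => by grind [PointMatrix.setPair]) _ _
        (hmem.1 hj).rel_ne_target
    obtain ⟨M', hM', hscore⟩ := hM₁.exists_shift_of_reflTransGen (reflTransGen_swap.2 hvj)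
    refine ⟨M', hM', scoreDefect_lt (fun i => ?_) (v := v) ?_⟩
    · have := hscore i; have := score_setPair M hjk (M j k - 1) (M k j) i
      grind
    · have := hscore v; have := score_setPair M hjk (M j k - 1) (M k j) v
      grind
  push Not at hdeficit hslack
  have hout : ∀ j ∈ A, ∀ k ∉ A, M j k = 0 := fun j hj k hk => by
    by_contra h
    exact hk (hmem.2 ((hmem.1 hj).tail (Nat.pos_of_ne_zero h)))
  have htight : ∀ j ∈ A, ∀ k ∈ A, j ≠ k → M j k + M k j ≤ a := fun j hj k hk _ => by
    rcases Nat.eq_zero_or_pos (M j k) with hjk | hjk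
    · rcases Nat.eq_zero_or_pos (M k j) with hkj | hkj
      · omega
      · have := hslack k hk j hkj; omega
    · exact hslack j hj k hjk
  have hup := sum_score_le_mul_choose_two_of_closed hM.1 hout htight
  have hlt : ∑ j ∈ A, D j < ∑ j ∈ A, score M j := sum_lt_sum hdeficit ⟨v, hmem.2 .refl, hv⟩
  have := hlow A
  omega

theorem exists_isABTournament_score_eq [LinearOrder ι] {D : ι → ℕ} (hab : a ≤ b)
    (hlow : ∀ A : Finset ι, a * (#A).choose 2 ≤ ∑ i ∈ A, D i)
    (hup : ∀ A : Finset ι, ∑ i ∈ A, D i ≤ b * ((#A).choose 2 + #A * #Aᶜ)) :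
    ∃ M, IsABTournament a b M ∧ ∀ i, score M i = D i := by
  obtain ⟨M, hM, hmin⟩ := (measure (scoreDefect D)).wf.has_min {M | IsABTournament a b M}
    ⟨fun i j => if j < i then a else 0, isABTournament_lowerTriangular hab⟩
  refine ⟨M, hM, fun v => by_contra fun hv => ?_⟩
  obtain ⟨M', hM', hlt⟩ := (Ne.lt_or_gt hv).elim (hM.exists_scoreDefect_lt_of_score_lt hup)
    (hM.exists_scoreDefect_lt_of_lt_score hlow)
  exact hmin M' hM' hlt

end PointMatrix

theorem Nat.add_choose_two (m k : ℕ) : (m + k).choose 2 = m.choose 2 + k.choose 2 + m * k := by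
  simp [Nat.add_choose_eq, Finset.Nat.antidiagonal_succ]
  ring

theorem Monotone.sum_filter_val_lt_card_le {n : ℕ} {D : Fin n → ℕ} (hD : Monotone D)
    (A : Finset (Fin n)) : ∑ i : Fin n with i.val < #A, D i ≤ ∑ i ∈ A, D i := by
  refine sum_le_sum_of_card_eq ?_ fun x hx y hy => hD ?_
  · simpa [Fin.card_filter_val_lt] using card_le_univ A
  · simp only [mem_sdiff, mem_filter, mem_univ, true_and] at hx hy
    exact Fin.le_def.2 (by omega)

theorem bbin_eq_choose_two (k : ℕ) : Bbin k = (k.choose 2 : ℕ) := by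
  rw [Bbin, Nat.choose_two_right]

theorem spart_eq_sum_filter (n : ℕ) (D : Fin n → ℕ) (k : ℕ) :
    Spart n D k = ((∑ i : Fin n with i.val < k, D i : ℕ) : ℤ) := by
  rw [Spart, sum_filter]
  push_cast
  rfl

theorem mul_bbin_sub_spart_le_lloss (n : ℕ) (D : Fin n → ℕ) (b : ℕ) {k m : ℕ} (hkm : k ≤ m) :
    b * Bbin k - Spart n D k ≤ Lloss n D b m := by
  induction m with
  | zero => simp [Nat.le_zero.1 hkm, Lloss, Bbin, Spart]
  | succ m ih =>
    rcases hkm.lt_or_eq with h | rfl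
    · exact (ih (by omega)).trans (le_max_left _ _)
    · exact le_max_right _ _

theorem Monotone.mul_choose_two_le_sum {n a : ℕ} {D : Fin n → ℕ} (hD : Monotone D)
    (hlow : ∀ k, 1 ≤ k → k ≤ n → (a : ℤ) * Bbin k ≤ Spart n D k) (A : Finset (Fin n)) :
    a * (#A).choose 2 ≤ ∑ i ∈ A, D i := by
  rcases Nat.eq_zero_or_pos #A with hA | hA
  · simp [hA]
  have := hlow #A hA (by simpa using card_le_univ A)
  rw [bbin_eq_choose_two, spart_eq_sum_filter] at this
  exact (Nat.cast_le.1 (by exact_mod_cast this)).trans (hD.sum_filter_val_lt_card_le A)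

theorem Monotone.sum_le_mul_choose_two_add {n b : ℕ} {D : Fin n → ℕ} (hD : Monotone D)
    (hup : ∀ k ≤ n, Spart n D n - Spart n D k ≤ b * (Bbin n - Bbin k)) (A : Finset (Fin n)) :
    ∑ i ∈ A, D i ≤ b * ((#A).choose 2 + #A * #Aᶜ) := by
  have hk := hup #Aᶜ (by simpa using card_le_univ Aᶜ)
  have hn : #A + #Aᶜ = n := by simp
  have hchoose := Nat.add_choose_two #A #Aᶜ
  rw [hn] at hchoose
  rw [bbin_eq_choose_two, bbin_eq_choose_two, spart_eq_sum_filter, spart_eq_sum_filter, hchoose,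
    filter_true_of_mem fun i _ => i.2] at hk
  have hcompl := Nat.cast_le (α := ℤ) |>.2 (hD.sum_filter_val_lt_card_le Aᶜ)
  have htotal := congrArg (Nat.cast (R := ℤ)) (sum_add_sum_compl A D)
  zify
  push_cast at hk hcompl htotal ⊢
  linarith

/-- For `n ≥ 2`, `a ≤ b`, if a nondecreasing sequence `D` of nonnegative
integers satisfies `a·B_k ≤ S_k ≤ b·B_n − L_k − (n−k)·d_k` for every `1 ≤ k ≤ n`, then
`D` is the score sequence of some `(a,b,n)`-tournament. -/
theorem isScoreSeqAB_sufficient (n : ℕ) (hn : 2 ≤ n) (a b : ℕ) (hab : a ≤ b)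
    (D : Fin n → ℕ) (hD : Monotone D)
    (hcond : ∀ k : ℕ, ∀ _hk1 : 1 ≤ k, ∀ _hk2 : k ≤ n,
      (a : ℤ) * Bbin k ≤ Spart n D k ∧
      Spart n D k ≤
        (b : ℤ) * Bbin n - Lloss n D b k - ((n - k : ℕ) : ℤ) * (D ⟨k - 1, by omega⟩ : ℤ)) :
    IsScoreSeqAB n a b D := by
  have hup : ∀ k ≤ n, Spart n D n - Spart n D k ≤ b * (Bbin n - Bbin k) := by
    intro k hk
    have htop := (hcond n (by omega) le_rfl).2
    have hloss := mul_bbin_sub_spart_le_lloss n D b hk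
    simp only [Nat.sub_self, Nat.cast_zero, zero_mul, sub_zero] at htop
    linarith
  obtain ⟨M, hM, hscore⟩ := PointMatrix.exists_isABTournament_score_eq hab
    (hD.mul_choose_two_le_sum fun k hk1 hk2 => (hcond k hk1 hk2).1)
    (hD.sum_le_mul_choose_two_add hup)
  exact ⟨M, hM.1, hM.2, hscore⟩
end

section
/- Let n ≥ 2. A nondecreasing sequence D = (d_1, d_2, …, d_n) of nonnegative integers is the score sequence of some (1,1,n)-tournament (i.e., an ordinary round-robin tournament in which every pair of distinct players shares exactly one point) if and only if d_1 + ⋯ + d_n = B_n and d_1 + ⋯ + d_i ≥ B_i for every i with 1 ≤ i ≤ n − 1, where B_i = i(i−1)/2. -/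
/-!
A tournament amounts to a choice of a winner for every game `s(i, j)`, `i ≠ j`. Give player `i`
exactly `d i` slots and assign the games injectively to slots of one of their two players. The
games of any set lie inside the set `S` of players they involve, and there are `B_{|S|}` games
inside `S`, so Hall's condition holds as soon as every `S` has at least `B_{|S|}` slots. Each player
then wins at most `d i` games and, since all `B_n = ∑ d i` games are won, exactly `d i`. For a
nondecreasing sequence the prefixes have the fewest slots among sets of their size, which turns this
condition into Landau's. Conversely, the `B_m` games among the first `m` players are won by them.
-/

open Finset

section Tournament

variable {ι : Type*} [DecidableEq ι] {M : ι → ι → ℕ}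

theorem sum_sum_eq_choose_two (hdiag : ∀ i, M i i = 0)
    (hpair : ∀ i j, i ≠ j → M i j + M j i = 1) (s : Finset ι) :
    ∑ i ∈ s, ∑ j ∈ s, M i j = (#s).choose 2 := by
  have hrow : ∀ i ∈ s, ∑ j ∈ s, (M i j + M j i) = #s - 1 := by
    intro i hi
    rw [← sum_erase_add s _ hi, hdiag, sum_congr rfl fun j hj => hpair i j (ne_of_mem_erase hj).symm,
      sum_const, card_erase_of_mem hi, smul_eq_mul, mul_one, add_zero, add_zero]
  have htwice : 2 * ∑ i ∈ s, ∑ j ∈ s, M i j = #s * (#s - 1) := by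
    rw [two_mul]
    nth_rewrite 2 [sum_comm]
    simp only [← sum_add_distrib]
    rw [sum_congr rfl hrow, sum_const, smul_eq_mul]
  rw [Nat.choose_two_right, ← htwice, Nat.mul_div_cancel_left _ two_pos]

theorem choose_two_card_le_sum_sum [Fintype ι] (hdiag : ∀ i, M i i = 0)
    (hpair : ∀ i j, i ≠ j → M i j + M j i = 1) (s : Finset ι) :
    (#s).choose 2 ≤ ∑ i ∈ s, ∑ j, M i j :=
  (sum_sum_eq_choose_two hdiag hpair s).ge.trans
    (sum_le_sum fun _ _ => sum_le_sum_of_subset (subset_univ s))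

def winMatrix (win : Sym2 ι → ι) (i j : ι) : ℕ := if i ≠ j ∧ win s(i, j) = i then 1 else 0

variable {win : Sym2 ι → ι}

theorem winMatrix_self (i : ι) : winMatrix win i i = 0 := by simp [winMatrix]

theorem winMatrix_add_winMatrix (hwin : ∀ e, win e ∈ e) {i j : ι} (hij : i ≠ j) :
    winMatrix win i j + winMatrix win j i = 1 := by
  rcases Sym2.mem_iff.1 (hwin s(i, j)) with h | h <;>
    simp [winMatrix, Sym2.eq_swap (a := j), h, hij, hij.symm]

theorem sum_winMatrix_add_one_le [Fintype ι] (hwin : ∀ e, win e ∈ e) (i : ι) :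
    ∑ j, winMatrix win i j + 1 ≤ #{e | win e = i} := by
  have hii : win s(i, i) = i := by simpa using hwin s(i, i)
  calc ∑ j, winMatrix win i j + 1 = #{j | win s(i, j) = i} := by
        simp only [winMatrix, sum_boole, Nat.cast_id]
        rw [← card_insert_of_notMem (s := {j | i ≠ j ∧ win s(i, j) = i}) (a := i) (by simp)]
        congr 1
        ext j
        by_cases hj : j = i
        · simp [hj, hii]
        · simp [hj, Ne.symm hj]
    _ ≤ #{e | win e = i} :=
        card_le_card_of_injOn (fun j => s(i, j)) (fun j hj => by simpa using hj)
          (fun j _ k _ h => Sym2.congr_right.1 h)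

-- Each player gets `D i + 1` slots, the extra one absorbing the diagonal game `s(i, i)`, so that
-- Hall's theorem applies to all of `Sym2 ι` and not only to the real games.
theorem exists_winner_card_le [Fintype ι] (D : ι → ℕ)
    (hD : ∀ s : Finset ι, (#s).choose 2 ≤ ∑ i ∈ s, D i) :
    ∃ win : Sym2 ι → ι, (∀ e, win e ∈ e) ∧ ∀ i, #{e | win e = i} ≤ D i + 1 := by
  let slots : Finset ι → Finset (Σ _ : ι, ℕ) := fun S => S.sigma fun i => range (D i + 1)
  have hall : ∀ s : Finset (Sym2 ι), #s ≤ #(s.biUnion fun e => slots {i | i ∈ e}) := by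
    intro s
    set S : Finset ι := s.biUnion fun e => {i | i ∈ e}
    calc #s ≤ #S.sym2 := card_le_card fun e he =>
          mem_sym2_iff.2 fun i hi => mem_biUnion.2 ⟨e, he, by simpa using hi⟩
      _ = (#S).choose 2 + #S := by
          rw [card_sym2, Nat.choose_succ_succ, Nat.choose_one_right, add_comm]
      _ ≤ ∑ i ∈ S, (D i + 1) := by
          rw [sum_add_distrib, ← card_eq_sum_ones]; exact Nat.add_le_add_right (hD S) _
      _ = #(slots S) := by simp [slots]
      _ ≤ #(s.biUnion fun e => slots {i | i ∈ e}) := card_le_card fun x hx => by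
          simp only [slots, S, mem_sigma, mem_biUnion, mem_filter, mem_univ, true_and] at hx ⊢
          obtain ⟨⟨e, he, hxe⟩, hx⟩ := hx
          exact ⟨e, he, hxe, hx⟩
  obtain ⟨f, hf_inj, hf_mem⟩ := (all_card_le_biUnion_card_iff_exists_injective _).1 hall
  refine ⟨fun e => (f e).1, fun e => by simpa [slots] using (mem_sigma.1 (hf_mem e)).1, fun i => ?_⟩
  calc #{e | (f e).1 = i} ≤ #(slots {i}) :=
        card_le_card_of_injOn f (fun e he => mem_sigma.2
          ⟨mem_singleton.2 (by simpa using he), (mem_sigma.1 (hf_mem e)).2⟩) hf_inj.injOn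
    _ = D i + 1 := by simp [slots]

theorem exists_tournament_of_choose_two_le [Fintype ι] (D : ι → ℕ)
    (hD : ∀ s : Finset ι, (#s).choose 2 ≤ ∑ i ∈ s, D i)
    (htot : ∑ i, D i = (Fintype.card ι).choose 2) :
    ∃ M : ι → ι → ℕ, (∀ i, M i i = 0) ∧ (∀ i j, i ≠ j → M i j + M j i = 1) ∧
      ∀ i, ∑ j, M i j = D i := by
  obtain ⟨win, hwin, hcard⟩ := exists_winner_card_le D hD
  have hdiag : ∀ i, winMatrix win i i = 0 := winMatrix_self
  have hpair : ∀ i j, i ≠ j → winMatrix win i j + winMatrix win j i = 1 :=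
    fun _ _ => winMatrix_add_winMatrix hwin
  have hrow : ∀ i ∈ univ, ∑ j, winMatrix win i j ≤ D i := fun i _ => by
    have := sum_winMatrix_add_one_le hwin i
    have := hcard i
    omega
  have htotal : ∑ i, ∑ j, winMatrix win i j = ∑ i, D i := by
    rw [sum_sum_eq_choose_two hdiag hpair univ, card_univ, htot]
  exact ⟨winMatrix win, hdiag, hpair, fun i => (sum_eq_sum_iff_of_le hrow).1 htotal i (mem_univ i)⟩

end Tournament

theorem Finset.sum_le_sum_of_card_eq_s11 {α M : Type*} [AddCommMonoid M] [LinearOrder M]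
    [IsOrderedAddMonoid M] {f : α → M} {A B : Finset α} (hcard : #A = #B)
    (hle : ∀ a ∈ A, ∀ b ∈ B, f a ≤ f b) : ∑ a ∈ A, f a ≤ ∑ b ∈ B, f b := by
  obtain rfl | hB := B.eq_empty_or_nonempty
  · simp [card_eq_zero.1 hcard]
  obtain ⟨b₀, hb₀, hmin⟩ := B.exists_min_image f hB
  calc ∑ a ∈ A, f a ≤ #A • f b₀ := sum_le_card_nsmul _ _ _ fun a ha => hle a ha b₀ hb₀
    _ = #B • f b₀ := by rw [hcard]
    _ ≤ ∑ b ∈ B, f b := card_nsmul_le_sum _ _ _ hmin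

theorem Monotone.sum_filter_lt_card_le_sum {n : ℕ} {D : Fin n → ℕ} (hD : Monotone D)
    (s : Finset (Fin n)) : ∑ i ∈ {i : Fin n | (i : ℕ) < #s}, D i ≤ ∑ i ∈ s, D i := by
  set P : Finset (Fin n) := {i | (i : ℕ) < #s}
  have hP : #P = #s := by
    simp only [P, Fin.card_filter_val_lt]
    exact min_eq_right (card_le_univ s |>.trans_eq (Fintype.card_fin n))
  have hcard : #(P \ s) = #(s \ P) := by
    have h1 := card_sdiff_add_card_inter P s
    have h2 := card_sdiff_add_card_inter s P
    rw [inter_comm] at h2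
    omega
  have hle : ∑ i ∈ P \ s, D i ≤ ∑ i ∈ s \ P, D i :=
    sum_le_sum_of_card_eq_s11 hcard fun a ha b hb => hD <| by
      simp only [P, mem_sdiff, mem_filter, mem_univ, true_and] at ha hb
      exact Fin.le_def.2 (by omega)
  rw [← sum_inter_add_sum_sdiff P s, ← sum_inter_add_sum_sdiff s P, inter_comm]
  exact Nat.add_le_add_left hle _

theorem isScoreSeq_landau_iff_general (n : ℕ) (D : Fin n → ℕ) (hD : Monotone D) :
    (∃ M : Fin n → Fin n → ℕ,
        (∀ i, M i i = 0) ∧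
        (∀ i j, i ≠ j → M i j + M j i = 1) ∧
        (∀ i, ∑ j, M i j = D i)) ↔
      ((∑ i, D i) = n * (n - 1) / 2 ∧
        ∀ m : ℕ, 1 ≤ m → m ≤ n - 1 →
          m * (m - 1) / 2 ≤ ∑ i : Fin n, if (i : ℕ) < m then D i else 0) := by
  simp only [← Nat.choose_two_right, ← sum_filter]
  constructor
  · rintro ⟨M, hdiag, hpair, hrow⟩
    obtain rfl : (fun i => ∑ j, M i j) = D := funext hrow
    refine ⟨by simpa using sum_sum_eq_choose_two hdiag hpair univ, fun m _ hm => ?_⟩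
    simpa [Fin.card_filter_val_lt, show m ≤ n by omega] using
      choose_two_card_le_sum_sum hdiag hpair {i : Fin n | (i : ℕ) < m}
  · rintro ⟨htot, hprefix⟩
    have hprefix_le : ∀ m ≤ n, m.choose 2 ≤ ∑ i ∈ {i : Fin n | (i : ℕ) < m}, D i := by
      intro m hm
      obtain rfl | hm0 := m.eq_zero_or_pos
      · simp
      obtain hm | rfl := hm.lt_or_eq
      · exact hprefix m hm0 (by omega)
      · simp [htot]
    refine exists_tournament_of_choose_two_le D (fun s => ?_) (by simpa using htot)
    exact (hprefix_le _ (card_le_univ s |>.trans_eq (Fintype.card_fin n))).trans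
      (hD.sum_filter_lt_card_le_sum s)

/-- Landau: For `n ≥ 2`, a nondecreasing sequence `D` of nonnegative
integers is the score sequence of some `(1,1,n)`-tournament (ordinary round robin) iff
`∑ D = B_n` and `d_1 + ⋯ + d_m ≥ B_m` for every `1 ≤ m ≤ n − 1`, where `B_m = m(m-1)/2`. -/
theorem isScoreSeq_landau_iff (n : ℕ) (hn : 2 ≤ n) (D : Fin n → ℕ) (hD : Monotone D) :
    (∃ M : Fin n → Fin n → ℕ,
        (∀ i, M i i = 0) ∧
        (∀ i j, i ≠ j → M i j + M j i = 1) ∧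
        (∀ i, ∑ j, M i j = D i)) ↔
      ((∑ i, D i) = n * (n - 1) / 2 ∧
        ∀ m : ℕ, 1 ≤ m → m ≤ n - 1 →
          m * (m - 1) / 2 ≤ ∑ i : Fin n, if (i : ℕ) < m then D i else 0) :=
  isScoreSeq_landau_iff_general n D hD
end
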